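/- For all x ∈ ℝ^n, uᵀ f(x) ≥ uᵀ x + uᵀ c, where uᵀ = e₁ᵀ adj(I − A). -/

import Mathlib

open Matrix

lemma det_add_vecMulVec_single {n : ℕ} (M : Matrix (Fin n) (Fin n) ℝ) (b : Fin n → ℝ)
    (z : Fin n) :
    (M + vecMulVec b (Pi.single z (1 : ℝ))).det
      = M.det + (M.updateCol z b).det := by
  have h : M + vecMulVec b (Pi.single z (1 : ℝ))
      = M.updateCol z ((fun i => M i z) + b) := by
    ext i j
    by_cases hj : j = z <;>
      simp [vecMulVec_apply, updateCol_apply, Pi.single_apply, hj]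
  rw [h, det_updateCol_add, updateCol_eq_self]

lemma dot_single_adj {n : ℕ} (M : Matrix (Fin n) (Fin n) ℝ) (b : Fin n → ℝ) (z : Fin n) :
    vecMul (Pi.single z (1 : ℝ)) (adjugate M) ⬝ᵥ b
      = (M.updateCol z b).det := by
  have h : vecMul (Pi.single z (1 : ℝ)) (adjugate M) ⬝ᵥ b
      = (adjugate M *ᵥ b) z := by
    simp [vecMul, dotProduct, mulVec, Finset.mul_sum, Pi.single_apply, mul_comm]
  rw [h, ← cramer_eq_adjugate_mulVec, cramer_apply]

theorem stmt13 (n : ℕ) (hn : 2 ≤ n) (A : Matrix (Fin n) (Fin n) ℝ) (b c : Fin n → ℝ)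
    (f : (Fin n → ℝ) → (Fin n → ℝ))
    (hf : ∀ x : Fin n → ℝ, f x = A.mulVec x + |x ⟨0, by omega⟩| • b + c)
    (hdm : 0 ≤ (1 - A + vecMulVec b (Pi.single (⟨0, by omega⟩ : Fin n) (1 : ℝ))).det)
    (hdp : (1 - A - vecMulVec b (Pi.single (⟨0, by omega⟩ : Fin n) (1 : ℝ))).det ≤ 0)
    (u : Fin n → ℝ)
    (hu : u = vecMul (Pi.single (⟨0, by omega⟩ : Fin n) (1 : ℝ)) (adjugate (1 - A))) :
    ∀ x : Fin n → ℝ, u ⬝ᵥ f x ≥ u ⬝ᵥ x + u ⬝ᵥ c := by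
  intro x
  set z : Fin n := ⟨0, by omega⟩
  set M : Matrix (Fin n) (Fin n) ℝ := 1 - A with hM
  set d : ℝ := M.det with hd
  set t : ℝ := u ⬝ᵥ b with ht
  have hplus : (M + vecMulVec b (Pi.single z (1 : ℝ))).det = d + t := by
    rw [det_add_vecMulVec_single, ht, hu, dot_single_adj]
  have hminus : (M - vecMulVec b (Pi.single z (1 : ℝ))).det = d - t := by
    have h1 := det_add_vecMulVec_single M (-b) z
    have hb : vecMulVec (-b) (Pi.single z (1 : ℝ)) = -vecMulVec b (Pi.single z (1 : ℝ)) := by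
      ext i j; simp [vecMulVec_apply]
    have hneg : (M.updateCol z (-b)).det = -(M.updateCol z b).det := by
      have h2 : (-b) = (-1 : ℝ) • b := by ext i; simp
      rw [h2, det_updateCol_smul]; ring
    rw [hb, hneg] at h1
    rw [sub_eq_add_neg, h1, ht, hu, dot_single_adj, ← hd]
    ring
  have htd : |d| ≤ t := by
    rw [hplus] at hdm
    rw [hminus] at hdp
    rw [abs_le]; constructor <;> linarith
  have hkey : u ⬝ᵥ (M *ᵥ x) = d * x z := by
    rw [hu, ← dotProduct_mulVec, mulVec_mulVec, adjugate_mul, smul_mulVec,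
      one_mulVec, single_dotProduct]
    simp [hd]
  have hMx : M *ᵥ x = x - A *ᵥ x := by
    rw [hM, sub_mulVec, one_mulVec]
  have hsub : u ⬝ᵥ x - u ⬝ᵥ (A *ᵥ x) = d * x z := by
    rw [← hkey, hMx, dotProduct_sub]
  rw [hf, ge_iff_le, dotProduct_add, dotProduct_add, dotProduct_smul, smul_eq_mul, ← ht]
  have h1 : d * x z ≤ |d| * |x z| := (le_abs_self _).trans (abs_mul d (x z)).le
  have h2 : |d| * |x z| ≤ t * |x z| := mul_le_mul_of_nonneg_right htd (abs_nonneg _)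
  nlinarith [h1, h2, hsub]
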